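/- arXiv:2504.09954 — 2 statements merged into one kernel-verified Lean document; each statement's English description precedes it below -/
import Mathlib

section
/- Let $a \ge 2$ be an integer and let $\varepsilon > 0$. Then $\sum_{p:\,(p,a)=1} \frac{\log p}{p\,(h_a(p))^{\varepsilon}} \ll 1$, i.e. the series over all primes $p$ coprime to $a$ converges, with a bound depending only on $a$ and $\varepsilon$. -/
open Finset Real



-- order basics
lemma aux_order (a p : ℕ) (ha : 2 ≤ a) (hp : p.Prime) (hco : Nat.Coprime p a) :
    1 ≤ orderOf ((a : ZMod p)) ∧ orderOf ((a : ZMod p)) ∣ p - 1 ∧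
      p ∣ a ^ orderOf ((a : ZMod p)) - 1 := by
  haveI : Fact p.Prime := ⟨hp⟩
  have hane : (a : ZMod p) ≠ 0 := by
    rw [Ne, ZMod.natCast_eq_zero_iff]
    intro hdvd
    have h1 := Nat.Coprime.eq_one_of_dvd hco hdvd
    have h2 := hp.two_le
    omega
  have hpow : (a : ZMod p) ^ (p - 1) = 1 := ZMod.pow_card_sub_one_eq_one hane
  have hdvd : orderOf ((a : ZMod p)) ∣ p - 1 := orderOf_dvd_of_pow_eq_one hpow
  have hp2 := hp.two_le
  have hp1 : 1 ≤ p - 1 := by omega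
  have hne : orderOf ((a : ZMod p)) ≠ 0 := by
    rintro h0; rw [h0] at hdvd; omega
  refine ⟨by omega, hdvd, ?_⟩
  have h1 : (a : ZMod p) ^ orderOf ((a : ZMod p)) = 1 := pow_orderOf_eq_one _
  have hge : 1 ≤ a ^ orderOf ((a : ZMod p)) := Nat.one_le_pow _ _ (by omega)
  rw [← ZMod.natCast_eq_zero_iff]
  push_cast [Nat.cast_sub hge]
  rw [h1, sub_self]



-- sum of logs of distinct primes dividing m
lemma aux_logsum (s : Finset ℕ) (m : ℕ) (hm : m ≠ 0)
    (hprime : ∀ p ∈ s, p.Prime) (hdvd : ∀ p ∈ s, p ∣ m) :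
    ∑ p ∈ s, Real.log p ≤ Real.log m := by
  have hprod : (∏ p ∈ s, p) ∣ m := by
    refine Finset.prod_primes_dvd m (fun p hp => ?_) hdvd
    exact (hprime p hp).prime
  have hle : (∏ p ∈ s, p) ≤ m := Nat.le_of_dvd (Nat.pos_of_ne_zero hm) hprod
  have h1 : ∑ p ∈ s, Real.log p = Real.log (∏ p ∈ s, (p : ℝ)) := by
    rw [Real.log_prod]
    intro p hp
    exact_mod_cast (hprime p hp).pos.ne'
  rw [h1]
  apply Real.log_le_log
  · rw [← Nat.cast_prod]  -- may need positivity
    exact_mod_cast Nat.pos_of_ne_zero (by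
      intro h0
      rw [Finset.prod_eq_zero_iff] at h0
      obtain ⟨p, hp, rfl⟩ := h0
      exact (hprime 0 hp).pos.ne rfl)
  · rw [← Nat.cast_prod]
    exact_mod_cast hle



lemma aux_harmonic (T : ℕ) : ∑ k ∈ Finset.Icc 1 T, (1 : ℝ) / k ≤ 1 + Real.log T := by
  have h := harmonic_le_one_add_log T
  have heq : ((harmonic T : ℚ) : ℝ) = ∑ k ∈ Finset.Icc 1 T, (1 : ℝ) / k := by
    rw [harmonic_eq_sum_Icc]
    push_cast
    simp [one_div]
  linarith [heq ▸ h]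

-- split lemma
lemma aux_split (s : Finset ℕ) (T : ℕ) (B : ℝ) (hT : 1 ≤ T)
    (h2 : ∀ p ∈ s, 2 ≤ p) (hB : ∑ p ∈ s, Real.log p ≤ B) :
    ∑ p ∈ s, Real.log p / p ≤ Real.log T * (1 + Real.log T) + B / T := by
  have hlognn : ∀ p ∈ s, 0 ≤ Real.log p := fun p hp =>
    Real.log_nonneg (by exact_mod_cast Nat.one_le_of_lt (h2 p hp))
  rw [← Finset.sum_filter_add_sum_filter_not s (fun p => p ≤ T)]
  have hle1 : ∑ p ∈ s.filter (fun p => p ≤ T), Real.log p / p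
      ≤ Real.log T * (1 + Real.log T) := by
    have step : ∑ p ∈ s.filter (fun p => p ≤ T), Real.log p / p
        ≤ ∑ p ∈ s.filter (fun p => p ≤ T), Real.log T * (1 / p) := by
      refine Finset.sum_le_sum fun p hp => ?_
      rw [Finset.mem_filter] at hp
      have hp2 := h2 p hp.1
      have hppos : (0:ℝ) < p := by exact_mod_cast Nat.lt_of_lt_of_le Nat.zero_lt_two hp2
      rw [div_eq_mul_one_div]
      apply mul_le_mul_of_nonneg_right _ (by positivity)
      exact Real.log_le_log (by exact_mod_cast Nat.lt_of_lt_of_le Nat.zero_lt_two hp2)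
        (by exact_mod_cast hp.2)
    refine step.trans ?_
    rw [← Finset.mul_sum]
    have hTnn : (0:ℝ) ≤ Real.log T := Real.log_nonneg (by exact_mod_cast hT)
    apply mul_le_mul_of_nonneg_left _ hTnn
    calc ∑ p ∈ s.filter (fun p => p ≤ T), (1 : ℝ) / p
        ≤ ∑ k ∈ Finset.Icc 1 T, (1 : ℝ) / k := by
          apply Finset.sum_le_sum_of_subset_of_nonneg
          · intro p hp
            rw [Finset.mem_filter] at hp
            rw [Finset.mem_Icc]
            exact ⟨Nat.one_le_of_lt (h2 p hp.1), hp.2⟩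
          · intro k _ _; positivity
      _ ≤ 1 + Real.log T := aux_harmonic T
  have hle2 : ∑ p ∈ s.filter (fun p => ¬ p ≤ T), Real.log p / p ≤ B / T := by
    have step : ∑ p ∈ s.filter (fun p => ¬ p ≤ T), Real.log p / p
        ≤ ∑ p ∈ s.filter (fun p => ¬ p ≤ T), Real.log p / T := by
      refine Finset.sum_le_sum fun p hp => ?_
      rw [Finset.mem_filter] at hp
      apply div_le_div_of_nonneg_left (hlognn p hp.1) (by positivity)
      exact_mod_cast Nat.le_of_lt (Nat.lt_of_not_le hp.2)
    refine step.trans ?_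
    rw [← Finset.sum_div]
    have hTpos : (0:ℝ) < T := by exact_mod_cast hT
    gcongr
    exact Finset.sum_le_sum_of_subset_of_nonneg (Finset.filter_subset _ _)
      (fun p hp _ => hlognn p hp) |>.trans hB
  linarith



lemma aux_rpow_block (ε : ℝ) (hε : 0 < ε) (h : ℕ) (hh : 1 ≤ h) :
    (((h : ℝ)) ^ ε)⁻¹ ≤ (2:ℝ) ^ (1 + ε) * ∑ n ∈ Finset.Ico h (2 * h), (((n : ℝ)) ^ (1 + ε))⁻¹ := by
  have hhpos : (0:ℝ) < h := by exact_mod_cast hh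
  have key : ∀ n ∈ Finset.Ico h (2 * h),
      (((2 * h : ℕ) : ℝ) ^ (1 + ε))⁻¹ ≤ (((n : ℝ)) ^ (1 + ε))⁻¹ := by
    intro n hn
    rw [Finset.mem_Ico] at hn
    have hnpos : (0:ℝ) < n := by
      have : 1 ≤ n := le_trans hh hn.1
      exact_mod_cast this
    apply inv_anti₀ (Real.rpow_pos_of_pos hnpos _)
    apply Real.rpow_le_rpow (le_of_lt hnpos) _ (by positivity)
    exact_mod_cast le_of_lt hn.2
  have hsum : (h : ℝ) * (((2 * h : ℕ) : ℝ) ^ (1 + ε))⁻¹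
      ≤ ∑ n ∈ Finset.Ico h (2 * h), (((n : ℝ)) ^ (1 + ε))⁻¹ := by
    have := Finset.sum_le_sum key
    rwa [Finset.sum_const, Nat.card_Ico, nsmul_eq_mul, show 2 * h - h = h by omega] at this
  have hid : ((h : ℝ) ^ ε)⁻¹ = (2:ℝ) ^ (1 + ε) * ((h : ℝ) * (((2 * h : ℕ) : ℝ) ^ (1 + ε))⁻¹) := by
    push_cast
    rw [Real.mul_rpow (by norm_num) (le_of_lt hhpos)]
    rw [show (1:ℝ) + ε = 1 + ε from rfl, Real.rpow_add hhpos, Real.rpow_one]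
    have h2pos : (0:ℝ) < (2:ℝ) ^ (1 + ε) := Real.rpow_pos_of_pos (by norm_num) _
    have hεpos : (0:ℝ) < (h:ℝ) ^ ε := Real.rpow_pos_of_pos hhpos _
    field_simp
  rw [hid]
  exact mul_le_mul_of_nonneg_left hsum (by positivity)



lemma aux_summable (ε c : ℝ) (hε : 0 < ε) (hc : 0 ≤ c) :
    Summable (fun n : ℕ => (((n : ℝ)) ^ (1 + ε))⁻¹
      * (2 * Real.log n * (1 + 2 * Real.log n) + c)) := by
  set K : ℝ := 4 / ε + 64 / (ε * ε) + c with hK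
  have hKpos : 0 < K := by positivity
  have hbase : Summable (fun n : ℕ => K * (((n : ℝ)) ^ (1 + ε / 2))⁻¹) :=
    (Real.summable_nat_rpow_inv.mpr (by linarith)).mul_left K
  refine Summable.of_nonneg_of_le (fun n => ?_) (fun n => ?_) hbase
  · have h1 := Real.log_natCast_nonneg n
    positivity
  · rcases Nat.eq_zero_or_pos n with rfl | hn
    · simp [Real.zero_rpow (by positivity : (1:ℝ) + ε ≠ 0),
        Real.zero_rpow (by positivity : (1:ℝ) + ε / 2 ≠ 0)]
    have hn1 : (1:ℝ) ≤ (n:ℝ) := by exact_mod_cast hn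
    have hnpos : (0:ℝ) < n := by linarith
    have hlog1 : Real.log n ≤ 2 / ε * (n:ℝ) ^ (ε / 2) := by
      calc Real.log n ≤ (n:ℝ) ^ (ε / 2) / (ε / 2) :=
            Real.log_natCast_le_rpow_div n (by positivity)
        _ = 2 / ε * (n:ℝ) ^ (ε / 2) := by field_simp
    have hlog2 : Real.log n * Real.log n ≤ 16 / (ε * ε) * (n:ℝ) ^ (ε / 2) := by
      have h4 := Real.log_natCast_le_rpow_div n (by positivity : (0:ℝ) < ε / 4)
      have hstep : Real.log n ≤ 4 / ε * (n:ℝ) ^ (ε / 4) := by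
        calc Real.log n ≤ (n:ℝ) ^ (ε / 4) / (ε / 4) := h4
          _ = 4 / ε * (n:ℝ) ^ (ε / 4) := by field_simp
      have hrnn : (0:ℝ) ≤ (n:ℝ) ^ (ε / 4) := Real.rpow_nonneg (le_of_lt hnpos) _
      have hlognn := Real.log_natCast_nonneg n
      calc Real.log n * Real.log n
          ≤ (4 / ε * (n:ℝ) ^ (ε / 4)) * (4 / ε * (n:ℝ) ^ (ε / 4)) := by
            apply mul_le_mul hstep hstep hlognn (by positivity)
        _ = 16 / (ε * ε) * ((n:ℝ) ^ (ε / 4) * (n:ℝ) ^ (ε / 4)) := by ring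
        _ = 16 / (ε * ε) * (n:ℝ) ^ (ε / 2) := by
            rw [← Real.rpow_add hnpos]; ring_nf
    have hc2 : c ≤ c * (n:ℝ) ^ (ε / 2) := by
      nlinarith [Real.one_le_rpow hn1 (by positivity : (0:ℝ) ≤ ε / 2)]
    have hbracket : 2 * Real.log n * (1 + 2 * Real.log n) + c ≤ K * (n:ℝ) ^ (ε / 2) := by
      have expand : 2 * Real.log n * (1 + 2 * Real.log n) + c
          = 2 * Real.log n + 4 * (Real.log n * Real.log n) + c := by ring
      rw [expand]
      have hrnn1 : (1:ℝ) ≤ (n:ℝ) ^ (ε / 2) := Real.one_le_rpow hn1 (by positivity)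
      have hexp : K * (n:ℝ) ^ (ε / 2)
          = 2 * (2 / ε * (n:ℝ) ^ (ε / 2)) + 4 * (16 / (ε * ε) * (n:ℝ) ^ (ε / 2))
            + c * (n:ℝ) ^ (ε / 2) := by rw [hK]; ring
      rw [hexp]
      have e1 := hlog1
      have e2 := hlog2
      linarith
    calc (((n : ℝ)) ^ (1 + ε))⁻¹ * (2 * Real.log n * (1 + 2 * Real.log n) + c)
        ≤ (((n : ℝ)) ^ (1 + ε))⁻¹ * (K * (n:ℝ) ^ (ε / 2)) := by
          apply mul_le_mul_of_nonneg_left hbracket (by positivity)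
      _ = K * (((n : ℝ)) ^ (1 + ε / 2))⁻¹ := by
          rw [show (1:ℝ) + ε = (1 + ε / 2) + ε / 2 by ring, Real.rpow_add hnpos]
          have h1 : (0:ℝ) < (n:ℝ) ^ (1 + ε / 2) := Real.rpow_pos_of_pos hnpos _
          have h2 : (0:ℝ) < (n:ℝ) ^ (ε / 2) := Real.rpow_pos_of_pos hnpos _
          field_simp


theorem stmt_3 (a : ℕ) (ha : 2 ≤ a) (ε : ℝ) (hε : 0 < ε) :
    ∃ C : ℝ, 0 < C ∧ ∀ N : ℕ,
      ∑ p ∈ (Finset.range (N + 1)).filter (fun p => p.Prime ∧ Nat.Coprime p a),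
        Real.log p / ((p : ℝ) * (orderOf ((a : ZMod p)) : ℝ) ^ ε) ≤ C := by
  set la := Real.log a with hla_def
  have hla : 0 ≤ la := Real.log_nonneg (by exact_mod_cast Nat.one_le_of_lt ha)
  set M : ℕ → ℝ := fun n => (2:ℝ) ^ (1 + ε) *
    ((((n : ℝ)) ^ (1 + ε))⁻¹ * (2 * Real.log n * (1 + 2 * Real.log n) + la)) with hM_def
  have hMsum : Summable M := (aux_summable ε la hε hla).mul_left _
  have hMnn : ∀ n, 0 ≤ M n := by
    intro n
    have h1 := Real.log_natCast_nonneg n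
    positivity
  have htsnn : 0 ≤ ∑' n, M n := tsum_nonneg hMnn
  refine ⟨1 + ∑' n, M n, by linarith, fun N => ?_⟩
  set F := (Finset.range (N + 1)).filter (fun p => p.Prime ∧ Nat.Coprime p a) with hF_def
  have hFfacts : ∀ p ∈ F, p.Prime ∧ Nat.Coprime p a ∧ p ≤ N := by
    intro p hp
    rw [hF_def, Finset.mem_filter, Finset.mem_range] at hp
    exact ⟨hp.2.1, hp.2.2, by omega⟩
  -- order notation
  have hord : ∀ p ∈ F, 1 ≤ orderOf ((a : ZMod p)) ∧ orderOf ((a : ZMod p)) ≤ N ∧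
      p ∣ a ^ orderOf ((a : ZMod p)) - 1 := by
    intro p hp
    obtain ⟨hprime, hco, hpN⟩ := hFfacts p hp
    obtain ⟨h1, hdvd, hpdvd⟩ := aux_order a p ha hprime hco
    have hp2 := hprime.two_le
    have : orderOf ((a : ZMod p)) ≤ p - 1 := Nat.le_of_dvd (by omega) hdvd
    exact ⟨h1, by omega, hpdvd⟩
  have hlogdivnn : ∀ p ∈ F, 0 ≤ Real.log p / p := by
    intro p hp
    have h2 := (hFfacts p hp).1.two_le
    have : (1:ℝ) ≤ p := by exact_mod_cast Nat.one_le_of_lt h2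
    exact div_nonneg (Real.log_nonneg this) (by linarith)
  set w : ℕ → ℝ := fun n => (((n : ℝ)) ^ (1 + ε))⁻¹ with hw_def
  have hwnn : ∀ n : ℕ, 0 ≤ w n := fun n => by positivity
  -- step B/C : pointwise bound via rpow block
  have step1 : ∑ p ∈ F, Real.log p / ((p : ℝ) * (orderOf ((a : ZMod p)) : ℝ) ^ ε)
      ≤ ∑ p ∈ F, (2:ℝ) ^ (1 + ε) *
          ∑ n ∈ Finset.Ico (orderOf ((a : ZMod p))) (2 * orderOf ((a : ZMod p))),
            (Real.log p / p) * w n := by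
    refine Finset.sum_le_sum fun p hp => ?_
    obtain ⟨h1, _, _⟩ := hord p hp
    have hblock := aux_rpow_block ε hε (orderOf ((a : ZMod p))) h1
    calc Real.log p / ((p : ℝ) * (orderOf ((a : ZMod p)) : ℝ) ^ ε)
        = (Real.log p / p) * (((orderOf ((a : ZMod p)) : ℝ)) ^ ε)⁻¹ := by
          rw [div_mul_eq_div_div, div_eq_mul_inv]
      _ ≤ (Real.log p / p) * ((2:ℝ) ^ (1 + ε) *
            ∑ n ∈ Finset.Ico (orderOf ((a : ZMod p))) (2 * orderOf ((a : ZMod p))), w n) :=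
          mul_le_mul_of_nonneg_left hblock (hlogdivnn p hp)
      _ = (2:ℝ) ^ (1 + ε) *
            ∑ n ∈ Finset.Ico (orderOf ((a : ZMod p))) (2 * orderOf ((a : ZMod p))),
              (Real.log p / p) * w n := by
          rw [mul_left_comm, Finset.mul_sum]
  -- step D : extend to common range with indicator
  have step2 : ∀ p ∈ F,
      ∑ n ∈ Finset.Ico (orderOf ((a : ZMod p))) (2 * orderOf ((a : ZMod p))),
        (Real.log p / p) * w n
      ≤ ∑ n ∈ Finset.range (2 * N + 1),
          (if orderOf ((a : ZMod p)) ≤ n then (Real.log p / p) * w n else 0) := by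
    intro p hp
    obtain ⟨h1, hN, _⟩ := hord p hp
    have heq : ∑ n ∈ Finset.Ico (orderOf ((a : ZMod p))) (2 * orderOf ((a : ZMod p))),
        (Real.log p / p) * w n
        = ∑ n ∈ Finset.Ico (orderOf ((a : ZMod p))) (2 * orderOf ((a : ZMod p))),
          (if orderOf ((a : ZMod p)) ≤ n then (Real.log p / p) * w n else 0) := by
      refine Finset.sum_congr rfl fun n hn => ?_
      rw [Finset.mem_Ico] at hn
      rw [if_pos hn.1]
    rw [heq]
    refine Finset.sum_le_sum_of_subset_of_nonneg ?_ ?_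
    · intro n hn
      rw [Finset.mem_Ico] at hn
      rw [Finset.mem_range]
      omega
    · intro n _ _
      split
      · exact mul_nonneg (hlogdivnn p hp) (hwnn n)
      · exact le_refl 0
  -- inner sum bound
  have inner_bound : ∀ n : ℕ,
      ∑ p ∈ F.filter (fun p => orderOf ((a : ZMod p)) ≤ n), Real.log p / p
      ≤ 2 * Real.log n * (1 + 2 * Real.log n) + la := by
    intro n
    rcases Nat.eq_zero_or_pos n with rfl | hn
    · have : F.filter (fun p => orderOf ((a : ZMod p)) ≤ 0) = ∅ := by
        rw [Finset.filter_eq_empty_iff]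
        intro p hp
        have := (hord p hp).1
        omega
      rw [this]
      simp [hla]
    -- n ≥ 1
    set D := F.filter (fun p => orderOf ((a : ZMod p)) ≤ n) with hD_def
    have hD2 : ∀ p ∈ D, 2 ≤ p := fun p hp =>
      (hFfacts p (Finset.mem_filter.mp hp).1).1.two_le
    have hBsum : ∑ p ∈ D, Real.log p ≤ (n:ℝ) * ((n:ℝ) * la) := by
      have hmaps : ∀ p ∈ D, orderOf ((a : ZMod p)) ∈ Finset.Icc 1 n := by
        intro p hp
        rw [hD_def, Finset.mem_filter] at hp
        exact Finset.mem_Icc.mpr ⟨(hord p hp.1).1, hp.2⟩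
      rw [← Finset.sum_fiberwise_of_maps_to hmaps (fun p => Real.log p)]
      have fiber_bound : ∀ d ∈ Finset.Icc 1 n,
          ∑ p ∈ D.filter (fun p => orderOf ((a : ZMod p)) = d), Real.log p ≤ (n:ℝ) * la := by
        intro d hd
        rw [Finset.mem_Icc] at hd
        have hm : a ^ d - 1 ≠ 0 := by
          have : 2 ≤ a ^ d := le_trans ha (Nat.le_self_pow (by omega) a)
          omega
        have hlog : ∑ p ∈ D.filter (fun p => orderOf ((a : ZMod p)) = d), Real.log p
            ≤ Real.log ((a ^ d - 1 : ℕ)) := by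
          refine aux_logsum _ _ hm ?_ ?_
          · intro p hp
            exact (hFfacts p (Finset.mem_filter.mp (Finset.mem_filter.mp hp).1).1).1
          · intro p hp
            rw [Finset.mem_filter] at hp
            have := (hord p (Finset.mem_filter.mp hp.1).1).2.2
            rwa [hp.2] at this
        refine hlog.trans ?_
        have h1 : Real.log ((a ^ d - 1 : ℕ)) ≤ Real.log ((a ^ d : ℕ)) := by
          apply Real.log_le_log
          · have : 2 ≤ a ^ d := le_trans ha (Nat.le_self_pow (by omega) a)
            have h0 : (1:ℕ) ≤ a ^ d - 1 := by omega
            exact_mod_cast Nat.lt_of_lt_of_le Nat.zero_lt_one h0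
          · have : a ^ d - 1 ≤ a ^ d := by omega
            exact_mod_cast this
        refine h1.trans ?_
        rw [Nat.cast_pow, Real.log_pow]
        have hdla : (d:ℝ) * la ≤ (n:ℝ) * la := by
          apply mul_le_mul_of_nonneg_right _ hla
          exact_mod_cast hd.2
        exact hdla
      calc ∑ d ∈ Finset.Icc 1 n, ∑ p ∈ D.filter (fun p => orderOf ((a : ZMod p)) = d),
              Real.log p
          ≤ ∑ _d ∈ Finset.Icc 1 n, (n:ℝ) * la := Finset.sum_le_sum fiber_bound
        _ = (n:ℝ) * ((n:ℝ) * la) := by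
            rw [Finset.sum_const, Nat.card_Icc]
            simp [nsmul_eq_mul]
    have hsplit := aux_split D (n ^ 2) ((n:ℝ) * ((n:ℝ) * la))
      (Nat.one_le_pow _ _ hn) hD2 hBsum
    refine hsplit.trans ?_
    have hlogT : Real.log ((n ^ 2 : ℕ) : ℝ) = 2 * Real.log n := by
      push_cast
      rw [Real.log_pow]
      push_cast
      ring
    rw [hlogT]
    have hnne : ((n ^ 2 : ℕ) : ℝ) ≠ 0 := by
      have : (1:ℕ) ≤ n ^ 2 := Nat.one_le_pow _ _ hn
      exact_mod_cast Nat.pos_iff_ne_zero.mp this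
    have hdiv : ((n:ℝ) * ((n:ℝ) * la)) / ((n ^ 2 : ℕ) : ℝ) = la := by
      push_cast
      rw [pow_two]
      have hn0 : (n:ℝ) ≠ 0 := by positivity
      field_simp
    rw [hdiv]
  -- assemble
  have main : ∑ p ∈ F, Real.log p / ((p : ℝ) * (orderOf ((a : ZMod p)) : ℝ) ^ ε)
      ≤ ∑ n ∈ Finset.range (2 * N + 1), M n := by
    refine step1.trans ?_
    have step2' : ∑ p ∈ F, (2:ℝ) ^ (1 + ε) *
        ∑ n ∈ Finset.Ico (orderOf ((a : ZMod p))) (2 * orderOf ((a : ZMod p))),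
          (Real.log p / p) * w n
        ≤ (2:ℝ) ^ (1 + ε) * ∑ p ∈ F, ∑ n ∈ Finset.range (2 * N + 1),
            (if orderOf ((a : ZMod p)) ≤ n then (Real.log p / p) * w n else 0) := by
      rw [← Finset.mul_sum]
      apply mul_le_mul_of_nonneg_left _ (by positivity)
      exact Finset.sum_le_sum step2
    refine step2'.trans ?_
    rw [Finset.sum_comm]
    rw [Finset.mul_sum]
    refine Finset.sum_le_sum fun n _ => ?_
    have hinner : ∑ p ∈ F, (if orderOf ((a : ZMod p)) ≤ n then (Real.log p / p) * w n else 0)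
        = (∑ p ∈ F.filter (fun p => orderOf ((a : ZMod p)) ≤ n), Real.log p / p) * w n := by
      rw [Finset.sum_mul]
      exact (Finset.sum_filter _ _).symm
    rw [hinner]
    have hb := inner_bound n
    calc (2:ℝ) ^ (1 + ε) *
          ((∑ p ∈ F.filter (fun p => orderOf ((a : ZMod p)) ≤ n), Real.log p / p) * w n)
        ≤ (2:ℝ) ^ (1 + ε) * ((2 * Real.log n * (1 + 2 * Real.log n) + la) * w n) := by
          apply mul_le_mul_of_nonneg_left _ (by positivity)
          exact mul_le_mul_of_nonneg_right hb (hwnn n)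
      _ = M n := by rw [hM_def]; ring
  have htail : ∑ n ∈ Finset.range (2 * N + 1), M n ≤ ∑' n, M n :=
    Summable.sum_le_tsum (Finset.range (2 * N + 1)) (fun i _ => hMnn i) hMsum
  linarith [main, htail]
end

section
/- Let $a\ge 2$ be an integer and $t$ a sufficiently large real number. Then $G(t) := \sum_{n \le t} \sum_{p:\,(p,a)=1,\, h_a(p)=n} \frac{\log p}{p} \ll \log t$, with implied constant depending only on $a$. -/
open Finset

-- Chebyshev-type bound from primorial ≤ 4^n
lemma cheb (N : ℕ) :
    ∑ p ∈ (Finset.range (N+1)).filter Nat.Prime, Real.log p ≤ N * Real.log 4 := by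
  have h0 : (0:ℝ) < (primorial N : ℝ) := by exact_mod_cast primorial_pos N
  have h1 : Real.log (primorial N) ≤ Real.log ((4:ℕ)^N : ℕ) := by
    apply Real.log_le_log h0
    exact_mod_cast primorial_le_4_pow N
  have h2 : Real.log (primorial N) = ∑ p ∈ (Finset.range (N+1)).filter Nat.Prime, Real.log p := by
    rw [primorial]
    push_cast
    rw [Real.log_prod]
    intro p hp
    simp only [Finset.mem_filter] at hp
    exact_mod_cast hp.2.pos.ne'
  rw [h2] at h1
  calc _ ≤ _ := h1
    _ = N * Real.log 4 := by push_cast; rw [Real.log_pow]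

lemma mert : ∀ K N : ℕ, N ≤ 2^K →
    ∑ p ∈ (Finset.range (N+1)).filter Nat.Prime, Real.log p / p
      ≤ ((K:ℝ) + 1) * (2 * Real.log 4) := by
  intro K
  induction K with
  | zero =>
    intro N hN
    interval_cases N
    · have : ((Finset.range 1).filter Nat.Prime) = ∅ := by decide
      rw [this]; simp; positivity
    · have : ((Finset.range 2).filter Nat.Prime) = ∅ := by decide
      rw [this]; simp; positivity
  | succ K ih =>
    intro N hN
    have hnn : ∀ p ∈ (Finset.range (N+1)).filter Nat.Prime, 0 ≤ Real.log p / p := by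
      intro p hp
      simp only [Finset.mem_filter] at hp
      have : (1:ℝ) ≤ p := by exact_mod_cast hp.2.one_lt.le
      have h0 : (0:ℝ) ≤ p := by linarith
      exact div_nonneg (Real.log_nonneg this) h0
    rw [← Finset.sum_filter_add_sum_filter_not ((Finset.range (N+1)).filter Nat.Prime)
      (fun p => p ≤ 2^K)]
    have h1 : ∑ p ∈ ((Finset.range (N+1)).filter Nat.Prime).filter (fun p => p ≤ 2^K),
        Real.log p / p ≤ ((K:ℝ) + 1) * (2 * Real.log 4) := by
      refine le_trans (Finset.sum_le_sum_of_subset_of_nonneg ?_ ?_) (ih (2^K) le_rfl)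
      · intro p hp
        simp only [Finset.mem_filter, Finset.mem_range] at hp ⊢
        exact ⟨by omega, hp.1.2⟩
      · intro p hp _
        simp only [Finset.mem_filter, Finset.mem_range] at hp
        have : (1:ℝ) ≤ p := by exact_mod_cast hp.2.one_lt.le
        exact div_nonneg (Real.log_nonneg this) (by linarith)
    have h2 : ∑ p ∈ ((Finset.range (N+1)).filter Nat.Prime).filter (fun p => ¬ p ≤ 2^K),
        Real.log p / p ≤ 2 * Real.log 4 := by
      have step : ∀ p ∈ ((Finset.range (N+1)).filter Nat.Prime).filter (fun p => ¬ p ≤ 2^K),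
          Real.log p / p ≤ Real.log p / 2^K := by
        intro p hp
        simp only [Finset.mem_filter, Finset.mem_range, not_le] at hp
        have hp2 : (2:ℝ)^K ≤ p := by exact_mod_cast hp.2.le
        have hlog : 0 ≤ Real.log p :=
          Real.log_nonneg (by exact_mod_cast hp.1.2.one_lt.le)
        apply div_le_div_of_nonneg_left hlog (by positivity) hp2
      calc ∑ p ∈ ((Finset.range (N+1)).filter Nat.Prime).filter (fun p => ¬ p ≤ 2^K),
            Real.log p / p
          ≤ ∑ p ∈ ((Finset.range (N+1)).filter Nat.Prime).filter (fun p => ¬ p ≤ 2^K),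
            Real.log p / 2^K := Finset.sum_le_sum step
        _ = (∑ p ∈ ((Finset.range (N+1)).filter Nat.Prime).filter (fun p => ¬ p ≤ 2^K),
            Real.log p) / 2^K := by rw [Finset.sum_div]
        _ ≤ (∑ p ∈ (Finset.range (N+1)).filter Nat.Prime, Real.log p) / 2^K := by
            apply div_le_div_of_nonneg_right ?_ (by positivity)
            apply Finset.sum_le_sum_of_subset_of_nonneg (Finset.filter_subset _ _)
            intro p hp _
            simp only [Finset.mem_filter, Finset.mem_range] at hp
            exact Real.log_nonneg (by exact_mod_cast hp.2.one_lt.le)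
        _ ≤ (N * Real.log 4) / 2^K := by
            apply div_le_div_of_nonneg_right (cheb N) (by positivity)
        _ ≤ ((2:ℝ)^(K+1) * Real.log 4) / 2^K := by
            apply div_le_div_of_nonneg_right ?_ (by positivity)
            have hN' : (N:ℝ) ≤ 2^(K+1) := by exact_mod_cast hN
            nlinarith [Real.log_nonneg (by norm_num : (1:ℝ) ≤ 4)]
        _ = 2 * Real.log 4 := by
            rw [pow_succ]
            field_simp
    push_cast
    linarith

lemma keylemma (M : ℕ) (hM : 1 ≤ M) :
    ∑ p ∈ M.primeFactors, Real.log p / p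
      ≤ (Real.log (Real.log M + 2) / Real.log 2 + 3) * (2 * Real.log 4) + 1 := by
  have hlogM : 0 ≤ Real.log M := Real.log_natCast_nonneg M
  set y : ℝ := Real.log M + 2 with hy_def
  have hy2 : (2:ℝ) ≤ y := by linarith
  have hy0 : (0:ℝ) < y := by linarith
  set m : ℕ := ⌊y⌋₊ with hm_def
  have hm2 : 2 ≤ m := Nat.le_floor (by exact_mod_cast hy2)
  have hmy : (m:ℝ) ≤ y := Nat.floor_le hy0.le
  set K : ℕ := Nat.log 2 m + 1 with hK_def
  have hmK : m ≤ 2 ^ K := (Nat.lt_pow_succ_log_self (by norm_num) m).le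
  -- split the sum
  rw [← Finset.sum_filter_add_sum_filter_not M.primeFactors (fun p : ℕ => (p:ℝ) ≤ y)]
  have hlog2pos : (0:ℝ) < Real.log 2 := Real.log_pos (by norm_num)
  have hlog4 : (0:ℝ) ≤ Real.log 4 := Real.log_nonneg (by norm_num)
  have hA : ∑ p ∈ M.primeFactors.filter (fun p : ℕ => (p:ℝ) ≤ y), Real.log p / p
      ≤ (Real.log y / Real.log 2 + 3) * (2 * Real.log 4) := by
    have hsub : M.primeFactors.filter (fun p : ℕ => (p:ℝ) ≤ y)
        ⊆ (Finset.range (m+1)).filter Nat.Prime := by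
      intro p hp
      simp only [Finset.mem_filter, Nat.mem_primeFactors, Finset.mem_range] at hp ⊢
      refine ⟨?_, hp.1.1⟩
      have : p ≤ m := Nat.le_floor hp.2
      omega
    have h1 : ∑ p ∈ M.primeFactors.filter (fun p : ℕ => (p:ℝ) ≤ y), Real.log p / p
        ≤ ∑ p ∈ (Finset.range (m+1)).filter Nat.Prime, Real.log p / p := by
      apply Finset.sum_le_sum_of_subset_of_nonneg hsub
      intro p hp _
      simp only [Finset.mem_filter, Finset.mem_range] at hp
      have : (1:ℝ) ≤ p := by exact_mod_cast hp.2.one_lt.le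
      exact div_nonneg (Real.log_nonneg this) (by linarith)
    have h2 := mert K m hmK
    have hKbound : ((K:ℝ) + 1) ≤ Real.log y / Real.log 2 + 3 := by
      have hpow : (2:ℝ) ^ (Nat.log 2 m) ≤ m := by
        exact_mod_cast Nat.pow_log_le_self 2 (by omega : m ≠ 0)
      have hlogm : (Nat.log 2 m : ℝ) * Real.log 2 ≤ Real.log y := by
        calc (Nat.log 2 m : ℝ) * Real.log 2 = Real.log ((2:ℝ) ^ (Nat.log 2 m)) := by
              rw [Real.log_pow]
          _ ≤ Real.log m := Real.log_le_log (by positivity) hpow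
          _ ≤ Real.log y := Real.log_le_log (by exact_mod_cast Nat.pos_of_ne_zero (by omega)) hmy
      have : (Nat.log 2 m : ℝ) ≤ Real.log y / Real.log 2 := by
        rw [le_div_iff₀ hlog2pos]; exact hlogm
      push_cast [hK_def]
      linarith
    calc _ ≤ _ := h1
      _ ≤ ((K:ℝ) + 1) * (2 * Real.log 4) := h2
      _ ≤ (Real.log y / Real.log 2 + 3) * (2 * Real.log 4) := by
          apply mul_le_mul_of_nonneg_right hKbound (by positivity)
  have hB : ∑ p ∈ M.primeFactors.filter (fun p : ℕ => ¬ (p:ℝ) ≤ y), Real.log p / p ≤ 1 := by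
    have hsumlog : ∑ p ∈ M.primeFactors, Real.log p ≤ Real.log M := by
      have hdvd : ∏ p ∈ M.primeFactors, p ∣ M := Nat.prod_primeFactors_dvd M
      have hle : (∏ p ∈ M.primeFactors, p : ℕ) ≤ M := Nat.le_of_dvd (by omega) hdvd
      have : Real.log (∏ p ∈ M.primeFactors, p : ℕ) = ∑ p ∈ M.primeFactors, Real.log p := by
        push_cast
        rw [Real.log_prod]
        intro p hp
        exact_mod_cast (Nat.prime_of_mem_primeFactors hp).pos.ne'
      rw [← this]
      exact Real.log_le_log (by exact_mod_cast Nat.pos_of_dvd_of_pos hdvd (by omega)) (by exact_mod_cast hle)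
    calc ∑ p ∈ M.primeFactors.filter (fun p : ℕ => ¬ (p:ℝ) ≤ y), Real.log p / p
        ≤ ∑ p ∈ M.primeFactors.filter (fun p : ℕ => ¬ (p:ℝ) ≤ y), Real.log p / y := by
          apply Finset.sum_le_sum
          intro p hp
          simp only [Finset.mem_filter, not_le] at hp
          have hlogp : 0 ≤ Real.log p :=
            Real.log_nonneg (by exact_mod_cast (Nat.prime_of_mem_primeFactors hp.1).one_lt.le)
          exact div_le_div_of_nonneg_left hlogp hy0 hp.2.le
      _ = (∑ p ∈ M.primeFactors.filter (fun p : ℕ => ¬ (p:ℝ) ≤ y), Real.log p) / y := by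
          rw [Finset.sum_div]
      _ ≤ (∑ p ∈ M.primeFactors, Real.log p) / y := by
          apply div_le_div_of_nonneg_right ?_ hy0.le
          apply Finset.sum_le_sum_of_subset_of_nonneg (Finset.filter_subset _ _)
          intro p hp _
          exact Real.log_nonneg (by exact_mod_cast (Nat.prime_of_mem_primeFactors hp).one_lt.le)
      _ ≤ Real.log M / y := div_le_div_of_nonneg_right hsumlog hy0.le
      _ ≤ 1 := by rw [div_le_one hy0]; linarith
  linarith

noncomputable def Fn (a n : ℕ) : Finset ℕ :=
  (a^n - 1).primeFactors.filter (fun p => Nat.Coprime p a ∧ orderOf ((a : ZMod p)) = n)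

lemma tsumEqFinsum (a n : ℕ) (ha : 2 ≤ a) (hn : 1 ≤ n) :
    (∑' p : {p : ℕ | p.Prime ∧ Nat.Coprime p a ∧ orderOf ((a : ZMod p)) = n},
      Real.log p / (p : ℝ)) = ∑ p ∈ Fn a n, Real.log p / p := by
  have han : 2 ≤ a ^ n := le_trans ha (Nat.le_self_pow (by omega) a)
  have hset : {p : ℕ | p.Prime ∧ Nat.Coprime p a ∧ orderOf ((a : ZMod p)) = n}
      = ↑(Fn a n) := by
    ext p
    simp only [Set.mem_setOf_eq, Finset.coe_filter, Fn, Nat.mem_primeFactors,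
      Set.mem_setOf_eq]
    constructor
    · rintro ⟨hp, hcop, hord⟩
      refine ⟨⟨hp, ?_, by omega⟩, hcop, hord⟩
      -- p ∣ a^n - 1
      have h1 : ((a : ZMod p))^n = 1 := by rw [← hord]; exact pow_orderOf_eq_one _
      have : ((a^n - 1 : ℕ) : ZMod p) = 0 := by
        have : ((a^n : ℕ) : ZMod p) = ((1 : ℕ) : ZMod p) := by push_cast; rw [h1]
        rw [Nat.cast_sub (by omega), this]
        simp
      exact (ZMod.natCast_eq_zero_iff _ _).mp this
    · rintro ⟨⟨hp, _, _⟩, hcop, hord⟩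
      exact ⟨hp, hcop, hord⟩
  rw [hset]
  exact Finset.tsum_subtype' (Fn a n) (fun p => Real.log p / (p:ℝ))

theorem stmt_4 (a : ℕ) (ha : 2 ≤ a) :
    ∃ C : ℝ, 0 < C ∧ ∃ t₀ : ℝ, ∀ t : ℝ, t₀ ≤ t →
      ∑ n ∈ Finset.Icc 1 ⌊t⌋₊,
        (∑' p : {p : ℕ | p.Prime ∧ Nat.Coprime p a ∧ orderOf ((a : ZMod p)) = n},
          Real.log p / (p : ℝ)) ≤ C * Real.log t := by
  refine ⟨100, by norm_num, (a:ℝ) + 9, fun t ht => ?_⟩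
  have hta : (a:ℝ) + 9 ≤ t := ht
  have ht11 : (11:ℝ) ≤ t := by
    have : (2:ℝ) ≤ a := by exact_mod_cast ha
    linarith
  set N := ⌊t⌋₊ with hN_def
  set M : ℕ := ∏ n ∈ Finset.Icc 1 N, (a^n - 1) with hM_def
  have hfac : ∀ n ∈ Finset.Icc 1 N, 1 ≤ a^n - 1 := by
    intro n hn
    simp only [Finset.mem_Icc] at hn
    have : 2 ≤ a^n := le_trans ha (Nat.le_self_pow (by omega) a)
    omega
  have hM1 : 1 ≤ M := Finset.one_le_prod' hfac
  -- step 1: rewrite tsums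
  have hstep1 : ∑ n ∈ Finset.Icc 1 N,
      (∑' p : {p : ℕ | p.Prime ∧ Nat.Coprime p a ∧ orderOf ((a : ZMod p)) = n},
        Real.log p / (p : ℝ)) = ∑ n ∈ Finset.Icc 1 N, ∑ p ∈ Fn a n, Real.log p / p := by
    apply Finset.sum_congr rfl
    intro n hn
    simp only [Finset.mem_Icc] at hn
    exact tsumEqFinsum a n ha hn.1
  -- step 2: combine into prime factors of M
  have hdisj : (↑(Finset.Icc 1 N) : Set ℕ).PairwiseDisjoint (Fn a) := by
    intro n _ m' _ hnm
    simp only [Function.onFun]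
    rw [Finset.disjoint_left]
    intro p hp hp'
    simp only [Fn, Finset.mem_filter] at hp hp'
    exact hnm (hp.2.2 ▸ hp'.2.2)
  have hsub : (Finset.Icc 1 N).biUnion (Fn a) ⊆ M.primeFactors := by
    intro p hp
    simp only [Finset.mem_biUnion] at hp
    obtain ⟨n, hn, hpn⟩ := hp
    simp only [Fn, Finset.mem_filter, Nat.mem_primeFactors] at hpn
    rw [Nat.mem_primeFactors]
    exact ⟨hpn.1.1, dvd_trans hpn.1.2.1 (Finset.dvd_prod_of_mem _ hn), by omega⟩
  have hnonneg : ∀ p : ℕ, p ∈ M.primeFactors → 0 ≤ Real.log p / p := by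
    intro p hp
    have : (1:ℝ) ≤ p := by exact_mod_cast (Nat.prime_of_mem_primeFactors hp).one_lt.le
    exact div_nonneg (Real.log_nonneg this) (by linarith)
  have hstep2 : ∑ n ∈ Finset.Icc 1 N, ∑ p ∈ Fn a n, Real.log p / p
      ≤ ∑ p ∈ M.primeFactors, Real.log p / p := by
    rw [← Finset.sum_biUnion hdisj]
    apply Finset.sum_le_sum_of_subset_of_nonneg hsub
    intro p hp _
    exact hnonneg p hp
  -- step 3: bound log M
  have ht0 : (0:ℝ) < t := by linarith
  have hNt : (N:ℝ) ≤ t := Nat.floor_le ht0.le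
  have hloga : Real.log a ≤ (a:ℝ) - 1 := by
    have := Real.log_le_sub_one_of_pos (show (0:ℝ) < a by positivity)
    linarith
  have hloga0 : 0 ≤ Real.log a := Real.log_natCast_nonneg a
  have hlogM : Real.log M ≤ t * t * Real.log a := by
    have hexp : Real.log M = ∑ n ∈ Finset.Icc 1 N, Real.log ((a^n - 1 : ℕ) : ℝ) := by
      rw [hM_def]
      push_cast
      rw [Real.log_prod]
      intro n hn
      have := hfac n hn
      positivity
    rw [hexp]
    calc ∑ n ∈ Finset.Icc 1 N, Real.log ((a^n - 1 : ℕ) : ℝ)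
        ≤ ∑ n ∈ Finset.Icc 1 N, (N : ℝ) * Real.log a := by
          apply Finset.sum_le_sum
          intro n hn
          simp only [Finset.mem_Icc] at hn
          calc Real.log ((a^n - 1 : ℕ) : ℝ)
              ≤ Real.log ((a^n : ℕ) : ℝ) := by
                apply Real.log_le_log
                · exact_mod_cast hfac n (by simp [Finset.mem_Icc]; omega)
                · exact_mod_cast Nat.sub_le _ _
            _ = (n : ℝ) * Real.log a := by push_cast; rw [Real.log_pow]
            _ ≤ (N : ℝ) * Real.log a := by
                apply mul_le_mul_of_nonneg_right _ hloga0
                exact_mod_cast hn.2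
      _ ≤ (N : ℝ) * ((N : ℝ) * Real.log a) := by
          rw [Finset.sum_const, nsmul_eq_mul]
          apply mul_le_mul_of_nonneg_right _ (by positivity)
          simp [Nat.card_Icc]
      _ ≤ t * t * Real.log a := by
          nlinarith [mul_le_mul_of_nonneg_right
            (mul_self_le_mul_self (Nat.cast_nonneg N) hNt) hloga0]
  -- step 4: final numeric estimate
  have hkey := keylemma M hM1
  set y : ℝ := Real.log M + 2 with hy_def
  have hlogM0 : 0 ≤ Real.log M := Real.log_natCast_nonneg M
  have hy2 : (2:ℝ) ≤ y := by linarith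
  have hyt3 : y ≤ t^3 := by
    have hat : (a:ℝ) ≤ t - 9 := by linarith
    have : Real.log M ≤ t * t * ((a:ℝ) - 1) := by nlinarith
    nlinarith
  have hlogy : Real.log y ≤ 3 * Real.log t := by
    calc Real.log y ≤ Real.log (t^3) := Real.log_le_log (by linarith) hyt3
      _ = 3 * Real.log t := by rw [Real.log_pow]; push_cast; ring
  have hL1 : 1 ≤ Real.log t := by
    rw [Real.le_log_iff_exp_le ht0]
    calc Real.exp 1 ≤ 2.7182818286 := (Real.exp_one_lt_d9).le
      _ ≤ t := by linarith
  have hu1 : (0.6931471803 : ℝ) < Real.log 2 := Real.log_two_gt_d9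
  have hu2 : Real.log 2 < 0.6931471808 := Real.log_two_lt_d9
  have hlog4 : Real.log 4 = 2 * Real.log 2 := by
    rw [show (4:ℝ) = 2^2 by norm_num, Real.log_pow]; push_cast; ring
  have hlogy0 : 0 ≤ Real.log y := Real.log_nonneg (by linarith)
  have hfin : (Real.log y / Real.log 2 + 3) * (2 * Real.log 4) + 1 ≤ 100 * Real.log t := by
    have hu0 : (0:ℝ) < Real.log 2 := by linarith
    have heq : Real.log y / Real.log 2 * (2 * Real.log 4) = 4 * Real.log y := by
      rw [hlog4]; field_simp; ring
    have : (Real.log y / Real.log 2 + 3) * (2 * Real.log 4)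
        = 4 * Real.log y + 12 * Real.log 2 := by
      rw [mul_comm, mul_add, mul_comm _ (Real.log y / Real.log 2), heq, hlog4]; ring
    rw [this]
    nlinarith
  rw [hstep1]
  calc ∑ n ∈ Finset.Icc 1 N, ∑ p ∈ Fn a n, Real.log p / p
      ≤ ∑ p ∈ M.primeFactors, Real.log p / p := hstep2
    _ ≤ (Real.log y / Real.log 2 + 3) * (2 * Real.log 4) + 1 := hkey
    _ ≤ 100 * Real.log t := hfin
end
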